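/- arXiv:math/0403199 — 2 statements merged into one kernel-verified Lean document; each statement's English description precedes it below -/
import Mathlib

section
/- Let (M, θ) be a manifold with a contact form with contact distribution 𝓗 = ker θ and Reeb vector field E. Suppose g is a Riemannian metric on M such that g restricted to each 𝓗_p is compatible with dθ|_{𝓗_p} (i.e. there is an endomorphism I of 𝓗_p with dθ(X, I Y) = g(X, Y) for X, Y ∈ 𝓗_p and I² = −Id), E has unit length, and E is g-orthogonal to 𝓗. Endow M × ℝ with the product of g and the standard metric ds ⊗ ds on ℝ. Then the 2-form ω̄ := ds ∧ θ + dθ on M × ℝ is nondegenerate and compatible with the product metric, i.e. ω̄(X, J Y) = g(X, Y) defines an almost complex structure J with J² = −Id. -/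
/-!
On `V × ℝ` take `J(v, a) = (I(v - θ(v) E) + a E, -θ(v))`: it acts as `I` on `𝓗 = ker θ` and
rotates the plane spanned by `E` and `∂ₛ`, so `J² = -1`. Since `E` spans the orthogonal
complement of `𝓗` and `ι_E dθ = 0`, with `P v = v - θ(v) E` the form `ω̄(X, J Y)` splits into
the `𝓗`-part `dθ(Pv, I Pw) = ⟪Pv, Pw⟫` and the `(E, ∂ₛ)`-part `θ(v) θ(w) + a b`, which add up to the product
metric. Nondegeneracy follows because `ω̄(X, J X) = ‖X‖²`.
-/

namespace ContactCylinder

section CommRing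

variable {R V : Type*} [CommRing R] [AddCommGroup V] [Module R V]

def horizontalProj (θ : V →ₗ[R] R) (E : V) : V →ₗ[R] V :=
  LinearMap.id - θ.smulRight E

/-- `ω̄ = ds ∧ θ + dθ`, evaluated on `V × R`. -/
def cylinderForm (θ : V →ₗ[R] R) (ω : V →ₗ[R] V →ₗ[R] R) (X Y : V × R) : R :=
  X.2 * θ Y.1 - Y.2 * θ X.1 + ω X.1 Y.1

def almostComplex (θ : V →ₗ[R] R) (E : V) (I : V →ₗ[R] V) : V × R →ₗ[R] V × R :=
  (I ∘ₗ horizontalProj θ E ∘ₗ LinearMap.fst R V R + (LinearMap.snd R V R).smulRight E).prod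
    (-(θ ∘ₗ LinearMap.fst R V R))

variable {θ : V →ₗ[R] R} {E : V}

@[simp]
theorem horizontalProj_apply (v : V) : horizontalProj θ E v = v - θ v • E := rfl

@[simp]
theorem almostComplex_apply (I : V →ₗ[R] V) (X : V × R) :
    almostComplex θ E I X = (I (horizontalProj θ E X.1) + X.2 • E, -θ X.1) := rfl

theorem apply_horizontalProj (hE : θ E = 1) (v : V) : θ (horizontalProj θ E v) = 0 := by
  simp [hE]

theorem almostComplex_almostComplex {I : V →ₗ[R] V} (hE : θ E = 1)
    (hI : ∀ v, θ v = 0 → θ (I v) = 0) (hIsq : ∀ v, θ v = 0 → I (I v) = -v) (X : V × R) :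
    almostComplex θ E I (almostComplex θ E I X) = -X := by
  obtain ⟨v, a⟩ := X
  have hIP : θ (I (horizontalProj θ E v)) = 0 := hI _ (apply_horizontalProj hE v)
  have hθJ : θ (I (horizontalProj θ E v) + a • E) = a := by
    rw [map_add, map_smul, hIP, hE, smul_eq_mul, mul_one, zero_add]
  have hPJ : horizontalProj θ E (I (horizontalProj θ E v) + a • E) = I (horizontalProj θ E v) := by
    rw [horizontalProj_apply, hθJ, add_sub_cancel_right]
  simp only [almostComplex_apply, hPJ, hθJ, hIsq _ (apply_horizontalProj hE v)]
  ext
  · simp only [horizontalProj_apply, Prod.fst_neg]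
    module
  · rfl

theorem apply_horizontalProj_left {ω : V →ₗ[R] V →ₗ[R] R} (hE : ∀ w, ω E w = 0) (v w : V) :
    ω (horizontalProj θ E v) w = ω v w := by
  simp [hE]

theorem cylinderForm_almostComplex {ω : V →ₗ[R] V →ₗ[R] R} {I : V →ₗ[R] V} (halt : ω.IsAlt)
    (hE1 : θ E = 1) (hE2 : ∀ w, ω E w = 0) (hI : ∀ v, θ v = 0 → θ (I v) = 0) (X Y : V × R) :
    cylinderForm θ ω X (almostComplex θ E I Y) =
      ω (horizontalProj θ E X.1) (I (horizontalProj θ E Y.1)) + θ X.1 * θ Y.1 + X.2 * Y.2 := by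
  have hIP : θ (I (horizontalProj θ E Y.1)) = 0 := hI _ (apply_horizontalProj hE1 Y.1)
  have hωE : ω X.1 E = 0 := halt.eq_iff.1 (hE2 X.1)
  simp only [cylinderForm, almostComplex_apply, apply_horizontalProj_left hE2, map_add, map_smul,
    hIP, hE1, hωE, smul_eq_mul]
  ring

end CommRing

section InnerProductSpace

variable {V : Type*} [NormedAddCommGroup V] [InnerProductSpace ℝ V] {θ : V →ₗ[ℝ] ℝ} {E : V}

theorem inner_eq_of_orthogonal_ker (hE1 : θ E = 1) (hEnorm : ‖E‖ = 1)
    (hEorth : ∀ v, θ v = 0 → inner ℝ E v = 0) (v : V) : inner ℝ E v = θ v := by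
  have h := hEorth _ (apply_horizontalProj hE1 v)
  rw [horizontalProj_apply, inner_sub_right, real_inner_smul_right, real_inner_self_eq_norm_sq,
    hEnorm] at h
  linarith

theorem inner_horizontalProj (hE1 : θ E = 1) (hθ : ∀ v, inner ℝ E v = θ v) (v w : V) :
    inner ℝ (horizontalProj θ E v) (horizontalProj θ E w) = inner ℝ v w - θ v * θ w := by
  have hv : inner ℝ v E = θ v := by rw [real_inner_comm, hθ]
  simp only [horizontalProj_apply, inner_sub_left, inner_sub_right, real_inner_smul_left,
    real_inner_smul_right, hθ, hv, hE1]
  ring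

theorem eq_zero_of_inner_add_mul_self_eq_zero {X : V × ℝ}
    (h : inner ℝ X.1 X.1 + X.2 * X.2 = 0) : X = 0 := by
  have h1 : inner ℝ X.1 X.1 = 0 := by
    linarith [real_inner_self_nonneg (x := X.1), mul_self_nonneg X.2]
  have h2 : X.2 * X.2 = 0 := by linarith
  exact Prod.ext (inner_self_eq_zero.1 h1) (mul_self_eq_zero.1 h2)

end InnerProductSpace

end ContactCylinder

open ContactCylinder in
theorem stmt3_general (V : Type*) [NormedAddCommGroup V] [InnerProductSpace ℝ V]
    (θ : V →ₗ[ℝ] ℝ) (ω : V →ₗ[ℝ] V →ₗ[ℝ] ℝ)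
    (halt : ∀ v, ω v v = 0)
    (E : V) (hE1 : θ E = 1) (hE2 : ∀ w, ω E w = 0)
    (hEnorm : ‖E‖ = 1) (hEorth : ∀ v, θ v = 0 → inner (𝕜 := ℝ) E v = 0)
    (I : V →ₗ[ℝ] V)
    (hI𝓗 : ∀ v, θ v = 0 → θ (I v) = 0)
    (hIsq : ∀ v, θ v = 0 → I (I v) = -v)
    (hIcompat : ∀ v w, θ v = 0 → θ w = 0 → ω v (I w) = inner (𝕜 := ℝ) v w)
    (ωbar : (V × ℝ) → (V × ℝ) → ℝ)
    (hωbar : ∀ X Y, ωbar X Y = X.2 * θ Y.1 - Y.2 * θ X.1 + ω X.1 Y.1) :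
    -- ω̄ is nondegenerate:
    (∀ X : V × ℝ, (∀ Y : V × ℝ, ωbar X Y = 0) → X = 0) ∧
    -- ω̄ is compatible with the product metric:
    (∃ J : (V × ℝ) →ₗ[ℝ] (V × ℝ),
      (∀ X Y : V × ℝ, ωbar X (J Y) = inner (𝕜 := ℝ) X.1 Y.1 + X.2 * Y.2) ∧
      (∀ X : V × ℝ, J (J X) = -X)) := by
  obtain rfl : ωbar = cylinderForm θ ω := funext₂ hωbar
  have hθ := inner_eq_of_orthogonal_ker hE1 hEnorm hEorth
  have hcompat (X Y : V × ℝ) :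
      cylinderForm θ ω X (almostComplex θ E I Y) = inner ℝ X.1 Y.1 + X.2 * Y.2 := by
    rw [cylinderForm_almostComplex halt hE1 hE2 hI𝓗,
      hIcompat _ _ (apply_horizontalProj hE1 _) (apply_horizontalProj hE1 _),
      inner_horizontalProj hE1 hθ]
    ring
  refine ⟨fun X hX => eq_zero_of_inner_add_mul_self_eq_zero ?_, almostComplex θ E I, hcompat,
    almostComplex_almostComplex hE1 hI𝓗 hIsq⟩
  rw [← hcompat, hX]

/-- `ω̄ = ds ∧ θ + dθ` is nondegenerate and compatible with the
product metric; pointwise formulation.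
`V` models the tangent space of `M` at a point, with the compatible Riemannian
metric given by the inner product.  `θ` and `ω` are the values of the contact
form and of `dθ`; `E` is the Reeb vector (`θ E = 1`, `ι_E ω = 0`), of unit
length and orthogonal to `𝓗 = ker θ`; `I` is the compatible complex structure
on `𝓗` (`ω(v, I w) = ⟪v,w⟫`, `I² = -Id` on `𝓗`).  The tangent space of `M × ℝ`
is `V × ℝ` with the product inner product `⟪(v,a),(w,b)⟫ = ⟪v,w⟫ + a b`, and
`ω̄((v,a),(w,b)) = a·θ w - b·θ v + ω v w`.
Conclusion: `ω̄` is nondegenerate, and there is `J` with `ω̄(X, J Y) = ⟪X,Y⟫`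
and `J² = -Id`. -/
theorem stmt3 (n : ℕ) (V : Type*) [NormedAddCommGroup V] [InnerProductSpace ℝ V]
    [FiniteDimensional ℝ V] (hdim : Module.finrank ℝ V = 2 * n + 1)
    (θ : V →ₗ[ℝ] ℝ) (ω : V →ₗ[ℝ] V →ₗ[ℝ] ℝ)
    (halt : ∀ v, ω v v = 0)
    (E : V) (hE1 : θ E = 1) (hE2 : ∀ w, ω E w = 0)
    (hEnorm : ‖E‖ = 1) (hEorth : ∀ v, θ v = 0 → inner (𝕜 := ℝ) E v = 0)
    (I : V →ₗ[ℝ] V)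
    (hI𝓗 : ∀ v, θ v = 0 → θ (I v) = 0)
    (hIsq : ∀ v, θ v = 0 → I (I v) = -v)
    (hIcompat : ∀ v w, θ v = 0 → θ w = 0 → ω v (I w) = inner (𝕜 := ℝ) v w)
    (ωbar : (V × ℝ) → (V × ℝ) → ℝ)
    (hωbar : ∀ X Y, ωbar X Y = X.2 * θ Y.1 - Y.2 * θ X.1 + ω X.1 Y.1) :
    -- ω̄ is nondegenerate:
    (∀ X : V × ℝ, (∀ Y : V × ℝ, ωbar X Y = 0) → X = 0) ∧
    -- ω̄ is compatible with the product metric: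
    (∃ J : (V × ℝ) →ₗ[ℝ] (V × ℝ),
      (∀ X Y : V × ℝ, ωbar X (J Y) = inner (𝕜 := ℝ) X.1 Y.1 + X.2 * Y.2) ∧
      (∀ X : V × ℝ, J (J X) = -X)) :=
  stmt3_general V θ ω halt E hE1 hE2 hEnorm hEorth I hI𝓗 hIsq hIcompat ωbar hωbar
end

section
/- Let (M, θ) be a manifold with a contact form, g a compatible Riemannian metric (g compatible with dθ on 𝓗 = ker θ, Reeb field E of unit length and orthogonal to 𝓗), and let a compact Lie group G act on M by isometries preserving θ. If, under the hypotheses of the Legendrian averaging theorem (all pairs (M, gN₀) gentle, d₁(gN₀, hN₀) < ε < 1/70000 for all g,h ∈ G, |∇θ| < 1, |∇dθ| < 1), the averaging construction applied to the family {g N₀}_{g ∈ G} (with G carrying its bi-invariant probability measure) produces a Legendrian submanifold L, then L is G-invariant and satisfies d₀(N₀, L) < 1000 ε. -/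
open Pointwise

/-- an averaged Legendrian submanifold is `G`-invariant.
`M` is a manifold with contact form and compatible metric on which the compact
Lie group `G` acts by isometric contactomorphisms; `avg` is the Legendrian
averaging construction of the paper, applied to families of (Legendrian)
submanifolds parameterized by `G` with its bi-invariant probability measure.
Its properties, quoted from the averaging theorem, are:
* equivariance under isometric contactomorphisms (here, the elements of `G`):
  `avg (g • N_·) = g • avg N_·`;
* equivariance under measure-preserving automorphisms of the parameter space
  (here, left translations of `G`): `avg (N_{g·}) = avg N_·`;
* the `C⁰` estimate: if all `(M, N_g)` are gentle pairs and
  `d₁(N_g, N_h) < ε < 1/70000` for all `g,h`, then `d₀(N_g, avg N) < 1000 ε`.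
Conclusion: for a Legendrian `N₀` with all `(M, g N₀)` gentle and
`d₁(g N₀, h N₀) < ε < 1/70000`, the average `L` of the family `{g N₀}` is
`G`-invariant and satisfies `d₀(N₀, L) < 1000 ε`. -/
theorem stmt11 (M : Type*) (G : Type*) [Group G] [MulAction G M]
    (gentle : Set M → Prop) (Legendrian : Set M → Prop)
    (d₀ d₁ : Set M → Set M → ℝ)
    (avg : (G → Set M) → Set M)
    -- equivariance under the isometric contactomorphisms g ∈ G:
    (hequiv : ∀ (N : G → Set M) (g : G), avg (fun h => g • N h) = g • avg N)
    -- equivariance under measure preserving automorphisms of G (translations):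
    (hreparam : ∀ (N : G → Set M) (g : G), avg (fun h => N (g * h)) = avg N)
    (ε : ℝ) (hε : 0 < ε) (hε' : ε < 1 / 70000)
    -- the C⁰-estimate of the Legendrian averaging theorem:
    (havg : ∀ N : G → Set M, (∀ g, Legendrian (N g)) → (∀ g, gentle (N g)) →
      (∀ g h, d₁ (N g) (N h) < ε) → ∀ g, d₀ (N g) (avg N) < 1000 * ε)
    -- the almost invariant Legendrian submanifold N₀:
    (N₀ : Set M) (hN₀ : Legendrian N₀)
    (hLeg : ∀ g : G, Legendrian (g • N₀))
    (hgentle : ∀ g : G, gentle (g • N₀))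
    (hd₁ : ∀ g h : G, d₁ (g • N₀) (h • N₀) < ε) :
    (∀ g : G, g • avg (fun h => h • N₀) = avg (fun h => h • N₀)) ∧
    d₀ N₀ (avg (fun h => h • N₀)) < 1000 * ε := by
  constructor
  · intro g
    rw [← hequiv (fun h => h • N₀) g]
    have : (fun h => g • (h • N₀)) = fun h => (g * h) • N₀ := by
      funext h; rw [mul_smul]
    rw [this]; exact hreparam (fun h => h • N₀) g
  · have := havg (fun h => h • N₀) hLeg hgentle hd₁ 1
    simpa using this
end
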